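/- arXiv:2305.04127 — 3 statements merged into one kernel-verified Lean document; each statement's English description precedes it below -/
import Mathlib

section
/- For every R > 0 there exists a constant C > 0 (depending only on R) such that for all integers ℓ ≥ 2, 0 ≤ i ≤ ℓ−1, and all x = (x_0, …, x_{ℓ−2}) ∈ [−R, R]^{ℓ−1}: |det(P^{(−i)}(x))| ≤ 2^{C · ℓ · log ℓ} · ∏_{0 ≤ c_1 < c_2 ≤ ℓ−2} |x_{c_1} − x_{c_2}|. -/
open Finset Real

/-- Probabilists' Hermite polynomial evaluated at a real number. -/
noncomputable def hermiteR (j : ℕ) (x : ℝ) : ℝ := Polynomial.aeval x (Polynomial.hermite j)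

/-!
Adjoin an indeterminate `X` to the points `x₀, …, x_{m-1}`. Since `He_r` is monic of degree `r`,
the `(m+1) × (m+1)` Hermite matrix of `(X, x₀, …, x_{m-1})` has the determinant of the Vandermonde
matrix of these points, `det V(x) · ∏ⱼ (xⱼ - X)`. Expanding it along the row of `X` shows that
`(-1)^i det P^{(-i)}(x)` is the `i`-th coordinate of this polynomial in the Hermite basis.
By the three-term recurrence `X He_n = He_{n+1} + n He_{n-1}`, multiplying a polynomial of degree
`n` by `xⱼ - X` enlarges its Hermite coordinates by a factor at most `R + n + 1`, so that
coordinate is at most `(R + m)^m |det V(x)|`, and `(R + m)^m ≤ 2^{C ℓ log ℓ}`.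
-/

open Polynomial Module

namespace Polynomial

theorem derivative_hermite_succ (n : ℕ) :
    derivative (hermite (n + 1)) = (n + 1 : ℤ[X]) * hermite n := by
  induction n with
  | zero => simp [hermite_zero]
  | succ n ih =>
    rw [hermite_succ (n + 1), derivative_sub, derivative_mul, derivative_X, ih, derivative_mul,
      hermite_succ n]
    simp only [derivative_add, derivative_natCast, derivative_one]
    push_cast
    ring

theorem X_mul_hermite_succ (n : ℕ) :
    X * hermite (n + 1) = hermite (n + 2) + (n + 1 : ℤ[X]) * hermite n := by
  rw [hermite_succ (n + 1), derivative_hermite_succ]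
  ring

noncomputable def hermiteSeq (R : Type*) [Ring R] [Nontrivial R] : Sequence R where
  elems' n := (hermite n).map (Int.castRingHom R)
  degree_eq' n := by rw [(hermite_monic n).degree_map, degree_hermite]

theorem hermiteSeq_monic (R : Type*) [Ring R] [Nontrivial R] (n : ℕ) :
    (hermiteSeq R n).Monic :=
  (hermite_monic n).map _

noncomputable def hermiteBasis (R : Type*) [Ring R] [IsDomain R] : Basis ℕ R R[X] :=
  (hermiteSeq R).basis fun n => by rw [(hermiteSeq_monic R n).leadingCoeff]; exact isUnit_one

section HermiteBasis

variable {R : Type*} [CommRing R] [IsDomain R]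

theorem hermiteBasis_apply (n : ℕ) :
    hermiteBasis R n = (hermite n).map (Int.castRingHom R) :=
  Sequence.basis_eq_self _ _ _

theorem natDegree_hermiteBasis (n : ℕ) : (hermiteBasis R n).natDegree = n := by
  rw [hermiteBasis, Sequence.basis_eq_self, Sequence.natDegree_eq]

theorem hermiteBasis_monic (n : ℕ) : (hermiteBasis R n).Monic := by
  rw [hermiteBasis, Sequence.basis_eq_self]
  exact hermiteSeq_monic R n

theorem hermiteBasis_zero : hermiteBasis R 0 = 1 := by
  simp [hermiteBasis_apply, hermite_zero]

theorem X_mul_hermiteBasis_zero : X * hermiteBasis R 0 = hermiteBasis R 1 := by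
  simp [hermiteBasis_apply, hermite_zero]

theorem X_mul_hermiteBasis_succ (n : ℕ) :
    X * hermiteBasis R (n + 1) = hermiteBasis R (n + 2) + (n + 1) • hermiteBasis R n := by
  simpa [hermiteBasis_apply, nsmul_eq_mul] using
    congrArg (map (Int.castRingHom R)) (X_mul_hermite_succ n)

theorem hermiteBasis_repr_X_mul_zero (p : R[X]) :
    (hermiteBasis R).repr (X * p) 0 = (hermiteBasis R).repr p 1 := by
  let f : R[X] →ₗ[R] R := ((hermiteBasis R).coord 0).comp (LinearMap.mulLeft R X)
  suffices f = (hermiteBasis R).coord 1 from LinearMap.congr_fun this p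
  refine (hermiteBasis R).ext fun t => ?_
  rcases t with _ | t
  · simp [f, X_mul_hermiteBasis_zero]
  · simp only [f, LinearMap.comp_apply, LinearMap.mulLeft_apply, X_mul_hermiteBasis_succ, map_add,
      map_nsmul, Basis.coord_apply, Basis.repr_self]
    rcases t with _ | t <;> simp

theorem hermiteBasis_repr_X_mul_succ (p : R[X]) (j : ℕ) :
    (hermiteBasis R).repr (X * p) (j + 1) =
      (hermiteBasis R).repr p j + (j + 2) * (hermiteBasis R).repr p (j + 2) := by
  let f : R[X] →ₗ[R] R := ((hermiteBasis R).coord (j + 1)).comp (LinearMap.mulLeft R X)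
  suffices f = (hermiteBasis R).coord j + (j + 2 : R) • (hermiteBasis R).coord (j + 2) from
    LinearMap.congr_fun this p
  refine (hermiteBasis R).ext fun t => ?_
  rcases t with _ | t
  · simp [f, X_mul_hermiteBasis_zero, Finsupp.single_apply, eq_comm]
  · simp only [f, LinearMap.comp_apply, LinearMap.mulLeft_apply, X_mul_hermiteBasis_succ, map_add,
      map_nsmul, LinearMap.add_apply, LinearMap.smul_apply, Basis.coord_apply, Basis.repr_self,
      Finsupp.single_apply, smul_eq_mul]
    split_ifs <;> first | omega | (subst_vars; push_cast; ring)

end HermiteBasis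

section CoordinateBounds

variable {p : ℝ[X]} {n : ℕ}

theorem hermiteBasis_repr_X_mul_eq_zero (hp : ∀ j, n < j → (hermiteBasis ℝ).repr p j = 0)
    {j : ℕ} (hj : n + 1 < j) : (hermiteBasis ℝ).repr (X * p) j = 0 := by
  obtain ⟨j, rfl⟩ := Nat.exists_eq_add_one.2 (by omega : 0 < j)
  rw [hermiteBasis_repr_X_mul_succ, hp j (by omega), hp (j + 2) (by omega)]
  ring

theorem abs_hermiteBasis_repr_X_mul_le (hp : ∀ j, n < j → (hermiteBasis ℝ).repr p j = 0)
    {B : ℝ} (hB : ∀ j, |(hermiteBasis ℝ).repr p j| ≤ B) (j : ℕ) :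
    |(hermiteBasis ℝ).repr (X * p) j| ≤ (n + 1) * B := by
  have hB0 : 0 ≤ B := (abs_nonneg _).trans (hB 0)
  rcases j with _ | j
  · rw [hermiteBasis_repr_X_mul_zero]
    nlinarith [hB 1]
  rw [hermiteBasis_repr_X_mul_succ]
  refine (abs_add_le _ _).trans ?_
  rcases lt_or_ge n (j + 2) with hn | hn
  · rw [hp _ hn, mul_zero, abs_zero, add_zero]
    nlinarith [hB j]
  · have : (j + 2 : ℝ) ≤ n := by exact_mod_cast hn
    rw [abs_mul, abs_of_nonneg (by positivity : (0 : ℝ) ≤ j + 2)]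
    nlinarith [hB j, hB (j + 2), abs_nonneg ((hermiteBasis ℝ).repr p (j + 2))]

theorem hermiteBasis_repr_prod_C_sub_X_eq_zero_and_abs_le {ι : Type*} [DecidableEq ι]
    (s : Finset ι) (x : ι → ℝ) {M : ℝ} (hM : 0 ≤ M) (hx : ∀ i ∈ s, |x i| ≤ M) :
    (∀ j, #s < j → (hermiteBasis ℝ).repr (∏ i ∈ s, (C (x i) - X)) j = 0) ∧
      ∀ j, |(hermiteBasis ℝ).repr (∏ i ∈ s, (C (x i) - X)) j| ≤ (M + #s) ^ #s := by
  induction s using Finset.induction_on with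
  | empty =>
    simp only [prod_empty, card_empty, pow_zero, ← hermiteBasis_zero, Basis.repr_self]
    exact ⟨fun j hj => Finsupp.single_eq_of_ne (by omega), fun j => by
      rw [Finsupp.single_apply]; split_ifs <;> simp⟩
  | insert a s ha ih =>
    obtain ⟨hsupp, hB⟩ := ih fun i hi => hx i (mem_insert_of_mem hi)
    set q := ∏ i ∈ s, (C (x i) - X)
    have hrepr (j : ℕ) : (hermiteBasis ℝ).repr (∏ i ∈ insert a s, (C (x i) - X)) j =
        x a * (hermiteBasis ℝ).repr q j - (hermiteBasis ℝ).repr (X * q) j := by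
      rw [prod_insert ha, sub_mul, C_mul', map_sub, map_smul]
      rfl
    rw [card_insert_of_notMem ha]
    refine ⟨fun j hj => ?_, fun j => ?_⟩
    · rw [hrepr, hsupp j (by omega), hermiteBasis_repr_X_mul_eq_zero hsupp (by omega)]
      ring
    · have hxa := hx a (mem_insert_self a s)
      calc |(hermiteBasis ℝ).repr (∏ i ∈ insert a s, (C (x i) - X)) j|
          ≤ |x a| * |(hermiteBasis ℝ).repr q j| + |(hermiteBasis ℝ).repr (X * q) j| := by
            rw [hrepr, ← abs_mul]
            exact abs_sub _ _
        _ ≤ M * (M + #s) ^ #s + (#s + 1) * (M + #s) ^ #s :=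
            add_le_add (mul_le_mul hxa (hB j) (abs_nonneg _) hM)
              (abs_hermiteBasis_repr_X_mul_le hsupp hB j)
        _ = (M + ↑(#s + 1)) * (M + #s) ^ #s := by push_cast; ring
        _ ≤ (M + ↑(#s + 1)) ^ (#s + 1) := by
            rw [pow_succ']
            gcongr
            linarith

end CoordinateBounds

end Polynomial

namespace Matrix

theorem sum_det_eval_succAbove_mul_eq {R : Type*} [CommRing R] [Nontrivial R] {m : ℕ}
    (p : ℕ → R[X]) (hdeg : ∀ j, (p j).natDegree = j) (hmonic : ∀ j, (p j).Monic)
    (x : Fin m → R) :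
    ∑ t : Fin (m + 1), C ((-1) ^ (t : ℕ) *
        (of fun r c : Fin m => (p (t.succAbove r)).eval (x c)).det) * p t =
      C (vandermonde x).det * ∏ j, (C (x j) - X) := by
  have key := det_eval_matrixOfPolynomials_eq_det_vandermonde
    (Fin.cons X fun c => C (x c) : Fin (m + 1) → R[X]) (fun j => (p j).map C)
    (fun j => by rw [(hmonic j).natDegree_map, hdeg]) (fun j => (hmonic j).map C)
  rw [det_vandermonde, Fin.prod_univ_succ, Fin.prod_Ioi_zero, det_succ_row_zero] at key
  simp only [Fin.prod_Ioi_succ, Fin.cons_zero, Fin.cons_succ, ← map_sub, ← map_prod] at key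
  rw [det_vandermonde x, mul_comm, key]
  refine sum_congr rfl fun t _ => ?_
  have hminor : (of fun i j : Fin (m + 1) =>
        ((p j).map C).eval (Fin.cons X (fun c => C (x c)) i)).submatrix Fin.succ t.succAbove =
      C.mapMatrix (of fun r c : Fin m => (p (t.succAbove r)).eval (x c)).transpose := by
    ext c r
    simp [eval_map, eval₂_at_apply]
  rw [hminor, ← RingHom.map_det, det_transpose, of_apply, Fin.cons_zero, eval_map, eval₂_C_X,
    map_mul, map_pow, map_neg, map_one]
  ring

theorem abs_det_vandermonde {R : Type*} [CommRing R] [LinearOrder R] [IsStrictOrderedRing R]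
    {m : ℕ} (x : Fin m → R) :
    |(vandermonde x).det| =
      ∏ p ∈ univ.filter (fun p : Fin m × Fin m => p.1 < p.2), |x p.1 - x p.2| := by
  rw [det_vandermonde, abs_prod, prod_filter, ← univ_product_univ, prod_product]
  refine prod_congr rfl fun i _ => ?_
  rw [abs_prod, ← prod_filter, filter_lt_eq_Ioi]
  exact prod_congr rfl fun j _ => abs_sub_comm _ _

end Matrix

theorem abs_det_hermiteBasis_eval_succAbove_le {m : ℕ} (x : Fin m → ℝ) {M : ℝ} (hM : 0 ≤ M)
    (hx : ∀ c, |x c| ≤ M) (i : Fin (m + 1)) :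
    |(Matrix.of fun r c : Fin m => (hermiteBasis ℝ (i.succAbove r)).eval (x c)).det| ≤
      (M + m) ^ m * |(Matrix.vandermonde x).det| := by
  set d : Fin (m + 1) → ℝ := fun t =>
    (Matrix.of fun r c : Fin m => (hermiteBasis ℝ (t.succAbove r)).eval (x c)).det
  have hcoord (c : Fin (m + 1) → ℝ) :
      (hermiteBasis ℝ).repr (∑ t, C (c t) * hermiteBasis ℝ t) i = c i := by
    simp [← smul_eq_C_mul, Finsupp.single_apply, Fin.val_inj]
  have hbound := (hermiteBasis_repr_prod_C_sub_X_eq_zero_and_abs_le univ x hM fun c _ => hx c).2 i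
  rw [card_univ, Fintype.card_fin] at hbound
  calc |d i|
      = |(hermiteBasis ℝ).repr (∑ t : Fin (m + 1), C ((-1) ^ (t : ℕ) * d t) * hermiteBasis ℝ t) i| := by
        rw [hcoord, abs_mul, abs_pow, abs_neg, abs_one, one_pow, one_mul]
    _ = |(Matrix.vandermonde x).det| * |(hermiteBasis ℝ).repr (∏ j, (C (x j) - X)) i| := by
        rw [Matrix.sum_det_eval_succAbove_mul_eq _ natDegree_hermiteBasis hermiteBasis_monic,
          ← smul_eq_C_mul, map_smul, Finsupp.smul_apply, smul_eq_mul, abs_mul]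
    _ ≤ (M + m) ^ m * |(Matrix.vandermonde x).det| := by
        rw [mul_comm]
        gcongr

theorem pow_le_two_rpow_mul_log {A : ℝ} (hA : 1 ≤ A) {m : ℕ} (hm : 1 ≤ m) :
    (A * (m + 1)) ^ (m + 1) ≤
      (2 : ℝ) ^ ((1 + log A / log 2) / log 2 * (m + 1) * log (m + 1)) := by
  have hlog2 : 0 < log 2 := log_pos one_lt_two
  have hlogm : log 2 ≤ log (m + 1) := log_le_log two_pos (by norm_cast; omega)
  have hlogA : log A ≤ log A / log 2 * log (m + 1) := by
    rw [div_mul_eq_mul_div, le_div_iff₀ hlog2]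
    exact mul_le_mul_of_nonneg_left hlogm (log_nonneg hA)
  calc (A * (m + 1)) ^ (m + 1) = exp ((m + 1) * (log A + log (m + 1))) := by
        rw [← log_mul (by positivity) (by positivity), ← Nat.cast_succ, ← log_pow,
          exp_log (by positivity), Nat.cast_succ]
    _ ≤ exp (log 2 * ((1 + log A / log 2) / log 2 * (m + 1) * log (m + 1))) := by
        refine exp_le_exp.2 ?_
        rw [show log 2 * ((1 + log A / log 2) / log 2 * (m + 1) * log (m + 1)) =
          (m + 1) * (log (m + 1) + log A / log 2 * log (m + 1)) by field_simp]
        exact mul_le_mul_of_nonneg_left (by linarith) (by positivity)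
    _ = _ := (rpow_def_of_pos two_pos _).symm

theorem hermiteR_eq_eval_hermiteBasis (j : ℕ) (y : ℝ) :
    hermiteR j y = (hermiteBasis ℝ j).eval y := by
  rw [hermiteR, hermiteBasis_apply, aeval_def, eval_map, algebraMap_int_eq]

/-- For every `R > 0` there exists `C > 0` (depending only on `R`) such that for all `ℓ ≥ 2`
(written as `ℓ = m + 1` with `m ≥ 1`), `0 ≤ i ≤ ℓ-1`, and all `x ∈ [-R,R]^{ℓ-1}`:
`|det(P^{(-i)}(x))| ≤ 2^{C·ℓ·log ℓ} · ∏_{c₁<c₂} |x_{c₁} - x_{c₂}|`, where `P^{(-i)}(x)` is the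
`(ℓ-1)×(ℓ-1)` matrix with rows indexed by `{0,…,ℓ-1}∖{i}` (in increasing order, via
`Fin.succAbove`) and `(r,c)`-entry `h_r(x_c)`. -/
theorem abs_det_hermite_deleteRow_le (R : ℝ) (hR : 0 < R) :
    ∃ C : ℝ, 0 < C ∧
      ∀ (m : ℕ), 1 ≤ m → ∀ i : Fin (m + 1), ∀ x : Fin m → ℝ,
        (∀ c, x c ∈ Set.Icc (-R) R) →
          |(Matrix.of fun r c : Fin m => hermiteR (i.succAbove r) (x c)).det| ≤
            (2 : ℝ) ^ (C * (m + 1 : ℝ) * Real.log (m + 1 : ℝ)) *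
              ∏ p ∈ Finset.univ.filter (fun p : Fin m × Fin m => p.1 < p.2), |x p.1 - x p.2| := by
  have hlog : 0 ≤ log (R + 1) := log_nonneg (by linarith)
  refine ⟨(1 + log (R + 1) / log 2) / log 2, by positivity, fun m hm i x hx => ?_⟩
  simp only [hermiteR_eq_eval_hermiteBasis, ← Matrix.abs_det_vandermonde]
  refine (abs_det_hermiteBasis_eval_succAbove_le x hR.le (fun c => abs_le.2 (hx c)) i).trans ?_
  gcongr
  have hbase : 1 ≤ (R + 1) * (m + 1) := by nlinarith
  calc (R + m) ^ m ≤ ((R + 1) * (m + 1)) ^ m := by gcongr; nlinarith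
    _ ≤ ((R + 1) * (m + 1)) ^ (m + 1) := pow_le_pow_right₀ hbase m.le_succ
    _ ≤ _ := pow_le_two_rpow_mul_log (by linarith) hm
end

section
/- (Integral Cauchy–Binet / Andréief identity.) Let S ⊆ ℝ be a measurable set, n ≥ 1, and let f_0, …, f_{n−1}, g_0, …, g_{n−1} : ℝ → ℝ be measurable functions such that each product f_r · g_c is integrable on S. Let A be the n×n matrix with entries A_{r,c} = ∫_S f_r(x) g_c(x) dx. Then det(A) = ∫_{x_0 > x_1 > ⋯ > x_{n−1}, x ∈ S^n} det(B(x)) · det(C(x)) dx, where for x = (x_0,…,x_{n−1}), B(x) is the n×n matrix with entries B(x)_{r,i} = f_r(x_i) and C(x) is the n×n matrix with entries C(x)_{i,c} = g_c(x_i). -/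
open MeasureTheory Finset

/-!
Expanding `det A` by the Leibniz formula and using Fubini, `det A` is the integral over `Sⁿ` of
`det B(x) · ∏_c g_c(x_c)`. Lebesgue measure on `Sⁿ` is invariant under permuting coordinates, and
almost every `x ∈ Sⁿ` has distinct coordinates, so it lies in exactly one chamber
`{x | x ∘ σ⁻¹ strictly decreasing}`. Folding the integral back onto the decreasing chamber
replaces the integrand by `∑_σ det B(x ∘ σ) · ∏_c g_c(x_{σ c})`, and since
`det B(x ∘ σ) = sign σ · det B(x)` this sum is `det B(x) · det C(x)`.
-/

section Sorting

variable {α : Type*} [LinearOrder α] {n : ℕ}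

theorem Equiv.Perm.eq_of_strictAnti_comp {x : Fin n → α} {σ τ : Equiv.Perm (Fin n)}
    (hσ : StrictAnti (x ∘ σ)) (hτ : StrictAnti (x ∘ τ)) : σ = τ := by
  have hmono : StrictMono (σ⁻¹ * τ) := fun a b hab =>
    hσ.lt_iff_gt.mp (by simpa [Function.comp_def] using hτ hab)
  have hid : ⇑(σ⁻¹ * τ) = id := (hmono.range_inj strictMono_id).1 (by simp)
  exact inv_mul_eq_one.mp (Equiv.ext (congrFun hid))

theorem exists_perm_strictAnti_comp {x : Fin n → α} (hx : Function.Injective x) :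
    ∃ σ : Equiv.Perm (Fin n), StrictAnti (x ∘ σ) := by
  set σ := Tuple.sort (OrderDual.toDual ∘ x)
  have hsorted : Monotone (OrderDual.toDual ∘ x ∘ σ) := Tuple.monotone_sort _
  exact ⟨σ, (hsorted.strictMono_of_injective
    ((OrderDual.toDual.injective.comp hx).comp σ.injective)).dual_right⟩

end Sorting

namespace MeasureTheory

variable {α : Type*} [MeasurableSpace α] (μ : Measure α) [SigmaFinite μ]

theorem measurableEmbedding_comp_perm {ι : Type*} (σ : Equiv.Perm ι) :
    MeasurableEmbedding fun x : ι → α => x ∘ σ :=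
  (MeasurableEquiv.arrowCongr' σ.symm (MeasurableEquiv.refl α)).measurableEmbedding

theorem measurePreserving_comp_perm {ι : Type*} [Fintype ι] (σ : Equiv.Perm ι) :
    MeasurePreserving (fun x : ι → α => x ∘ σ)
      (Measure.pi fun _ : ι => μ) (Measure.pi fun _ : ι => μ) :=
  measurePreserving_arrowCongr' _ _ σ.symm (MeasurableEquiv.refl α) fun _ => .id μ

theorem Measure.pi_setOf_apply_eq_apply_eq_zero [MeasurableEq α] [NullSingletonClass μ] {n : ℕ}
    {i j : Fin n} (hij : i ≠ j) : Measure.pi (fun _ : Fin n => μ) {x | x i = x j} = 0 := by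
  cases n with
  | zero => exact i.elim0
  | succ n =>
    obtain ⟨k, rfl⟩ := Fin.exists_succAbove_eq hij.symm
    have hmeas : MeasurableSet {p : α × (Fin n → α) | p.1 = p.2 k} :=
      measurableSet_eq_fun measurable_fst ((measurable_pi_apply k).comp measurable_snd)
    change Measure.pi _ (MeasurableEquiv.piFinSuccAbove (fun _ => α) i ⁻¹'
      {p : α × (Fin n → α) | p.1 = p.2 k}) = 0
    rw [(measurePreserving_piFinSuccAbove (fun _ => μ) i).measure_preimage
      hmeas.nullMeasurableSet, Measure.measure_prod_null hmeas]
    refine Filter.Eventually.of_forall fun a => ?_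
    simpa [eq_comm] using Measure.pi_hyperplane (fun _ => μ) k a

theorem Measure.ae_pi_injective [MeasurableEq α] [NullSingletonClass μ] {n : ℕ} :
    ∀ᵐ x ∂(Measure.pi fun _ : Fin n => μ), Function.Injective x := by
  have hpair (i j : Fin n) : ∀ᵐ x ∂(Measure.pi fun _ : Fin n => μ), x i = x j → i = j := by
    rcases eq_or_ne i j with rfl | hij
    · exact Filter.Eventually.of_forall fun _ _ => rfl
    · exact measure_mono_null (fun x hx => by simpa [hij] using hx)
        (Measure.pi_setOf_apply_eq_apply_eq_zero μ hij)
  filter_upwards [ae_all_iff.2 fun i => ae_all_iff.2 (hpair i)] with x hx i j using hx i j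

end MeasureTheory

section Chamber

variable {α : Type*} [LinearOrder α] [TopologicalSpace α] [OrderClosedTopology α]
  [SecondCountableTopology α] [MeasurableSpace α] [OpensMeasurableSpace α] {n : ℕ}

theorem measurableSet_setOf_strictAnti : MeasurableSet {x : Fin n → α | StrictAnti x} := by
  have h : {x : Fin n → α | StrictAnti x} = ⋂ (i) (j) (_ : i < j), {x | x j < x i} := by
    ext x; simp [StrictAnti]
  rw [h]
  exact .iInter fun i => .iInter fun j => .iInter fun _ =>
    measurableSet_lt (measurable_pi_apply j) (measurable_pi_apply i)

theorem integral_eq_setIntegral_strictAnti_sum_perm (μ : Measure α) [SigmaFinite μ]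
    [NullSingletonClass μ] {E : Type*} [NormedAddCommGroup E] [NormedSpace ℝ E]
    {F : (Fin n → α) → E} (hF : Integrable F (Measure.pi fun _ => μ)) :
    ∫ x, F x ∂(Measure.pi fun _ => μ) =
      ∫ x in {x | StrictAnti x}, ∑ σ : Equiv.Perm (Fin n), F (x ∘ σ) ∂(Measure.pi fun _ => μ) := by
  set ν := Measure.pi fun _ : Fin n => μ
  set chamber : Equiv.Perm (Fin n) → Set (Fin n → α) := fun σ => {x | StrictAnti (x ∘ ⇑σ⁻¹)}
  have hpre (σ : Equiv.Perm (Fin n)) :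
      (fun x => x ∘ ⇑σ) ⁻¹' chamber σ = {x | StrictAnti x} := by
    ext x; simp [chamber, Function.comp_assoc]
  have hmeas (σ : Equiv.Perm (Fin n)) : MeasurableSet (chamber σ) :=
    (measurePreserving_comp_perm μ σ⁻¹).measurable measurableSet_setOf_strictAnti
  have hdisj : Pairwise (Function.onFun Disjoint chamber) := fun σ τ hne =>
    Set.disjoint_left.2 fun x hσ hτ => hne (inv_inj.1 (Equiv.Perm.eq_of_strictAnti_comp hσ hτ))
  have hcover : ∀ᵐ x ∂ν, x ∈ ⋃ σ, chamber σ := (Measure.ae_pi_injective μ).mono fun x hx => by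
    obtain ⟨σ, hσ⟩ := exists_perm_strictAnti_comp hx
    exact Set.mem_iUnion.2 ⟨σ⁻¹, by simpa only [chamber, Set.mem_ofPred_eq, inv_inv] using hσ⟩
  calc ∫ x, F x ∂ν = ∫ x in ⋃ σ, chamber σ, F x ∂ν := by
        rw [Measure.restrict_eq_self_of_ae_mem hcover]
    _ = ∑ σ, ∫ x in chamber σ, F x ∂ν :=
      integral_iUnion_fintype hmeas hdisj fun _ => hF.integrableOn
    _ = ∑ σ : Equiv.Perm (Fin n), ∫ x in {x | StrictAnti x}, F (x ∘ ⇑σ) ∂ν := by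
      refine Finset.sum_congr rfl fun σ _ => ?_
      rw [← hpre σ, (measurePreserving_comp_perm μ σ).setIntegral_preimage_emb
        (measurableEmbedding_comp_perm σ)]
    _ = _ := (integral_finsetSum _ fun σ _ => ((measurePreserving_comp_perm μ σ).integrable_comp_emb
      (measurableEmbedding_comp_perm σ) |>.2 hF).integrableOn).symm

end Chamber

section Determinant

variable {ι : Type*} [Fintype ι] [DecidableEq ι]

theorem Matrix.sum_perm_det_submatrix_mul_prod {R : Type*} [CommRing R] (B C : Matrix ι ι R) :
    ∑ σ : Equiv.Perm ι, (B.submatrix id σ).det * ∏ c, C (σ c) c = B.det * C.det := by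
  rw [C.det_apply', Finset.mul_sum]
  refine Finset.sum_congr rfl fun σ _ => ?_
  rw [Matrix.det_permute']
  ring

theorem det_of_apply_mul_prod_eq_sum_perm {α R : Type*} [CommRing R] (f g : ι → α → R)
    (x : ι → α) :
    (Matrix.of fun r i => f r (x i)).det * ∏ c, g c (x c) =
      ∑ σ : Equiv.Perm ι, (Equiv.Perm.sign σ : R) * ∏ c, f (σ c) (x c) * g c (x c) := by
  simp only [Matrix.det_apply', Matrix.of_apply, Finset.sum_mul, mul_assoc, Finset.prod_mul_distrib]

variable {𝕜 α : Type*} [RCLike 𝕜] [MeasurableSpace α] (μ : Measure α) [SigmaFinite μ]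

theorem integrable_det_of_apply_mul_prod (f g : ι → α → 𝕜)
    (hfg : ∀ r c, Integrable (fun x => f r x * g c x) μ) :
    Integrable (fun x => (Matrix.of fun r i => f r (x i)).det * ∏ c, g c (x c))
      (Measure.pi fun _ => μ) := by
  simp_rw [det_of_apply_mul_prod_eq_sum_perm]
  exact integrable_finsetSum _ fun σ _ =>
    (Integrable.fintype_prod fun c => hfg (σ c) c).const_mul _

theorem det_integral_mul_eq_integral_det_of_apply_mul_prod (f g : ι → α → 𝕜)
    (hfg : ∀ r c, Integrable (fun x => f r x * g c x) μ) :
    (Matrix.of fun r c => ∫ x, f r x * g c x ∂μ).det =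
      ∫ x, (Matrix.of fun r i => f r (x i)).det * ∏ c, g c (x c) ∂(Measure.pi fun _ => μ) := by
  simp_rw [det_of_apply_mul_prod_eq_sum_perm]
  rw [integral_finsetSum _ fun σ _ => (Integrable.fintype_prod fun c => hfg (σ c) c).const_mul _,
    Matrix.det_apply']
  refine Finset.sum_congr rfl fun σ _ => ?_
  rw [integral_const_mul, integral_fintype_prod_eq_prod (f := fun c x => f (σ c) x * g c x)]
  rfl

end Determinant

theorem andreief_identity_general (S : Set ℝ) (n : ℕ) (f g : Fin n → ℝ → ℝ)
    (hfg : ∀ r c, IntegrableOn (fun x => f r x * g c x) S) :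
    (Matrix.of fun r c : Fin n => ∫ x in S, f r x * g c x).det =
      ∫ x in {x : Fin n → ℝ | (∀ i, x i ∈ S) ∧ (∀ i j : Fin n, i < j → x j < x i)},
        (Matrix.of fun r i : Fin n => f r (x i)).det *
          (Matrix.of fun i c : Fin n => g c (x i)).det := by
  have hregion : {x : Fin n → ℝ | (∀ i, x i ∈ S) ∧ (∀ i j : Fin n, i < j → x j < x i)} =
      {x | StrictAnti x} ∩ Set.univ.pi fun _ => S := by
    ext x; simp [StrictAnti, and_comm]
  rw [hregion, ← Measure.restrict_restrict measurableSet_setOf_strictAnti, volume_pi,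
    Measure.restrict_pi_pi, det_integral_mul_eq_integral_det_of_apply_mul_prod _ f g hfg,
    integral_eq_setIntegral_strictAnti_sum_perm _ (integrable_det_of_apply_mul_prod _ f g hfg)]
  refine setIntegral_congr_fun measurableSet_setOf_strictAnti fun x _ => ?_
  exact Matrix.sum_perm_det_submatrix_mul_prod
    (Matrix.of fun r i => f r (x i)) (Matrix.of fun i c => g c (x i))

/-- Integral Cauchy–Binet / Andréief identity: if `A_{r,c} = ∫_S f_r(x) g_c(x) dx`, then
`det A = ∫_{x₀ > ⋯ > x_{n-1}, x ∈ Sⁿ} det(B(x)) · det(C(x)) dx`, where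
`B(x)_{r,i} = f_r(x_i)` and `C(x)_{i,c} = g_c(x_i)`. -/
theorem andreief_identity (S : Set ℝ) (hS : MeasurableSet S) (n : ℕ) (hn : 1 ≤ n)
    (f g : Fin n → ℝ → ℝ) (hf : ∀ r, Measurable (f r)) (hg : ∀ c, Measurable (g c))
    (hfg : ∀ r c, IntegrableOn (fun x => f r x * g c x) S) :
    (Matrix.of fun r c : Fin n => ∫ x in S, f r x * g c x).det =
      ∫ x in {x : Fin n → ℝ | (∀ i, x i ∈ S) ∧ (∀ i j : Fin n, i < j → x j < x i)},
        (Matrix.of fun r i : Fin n => f r (x i)).det *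
          (Matrix.of fun i c : Fin n => g c (x i)).det :=
  andreief_identity_general S n f g hfg
end

section
/- Let R > 0, M > 0, k ≥ 1, w_1, …, w_k > 0 with Σ_i w_i = 1 and μ_1, …, μ_k ∈ [−M, M], and let m_j := Σ_i w_i μ_i^j. Then for every polynomial f : ℝ → ℝ, the series Σ_{j=0}^∞ J_{f,j} · m_j converges absolutely and ∫_S f(x) · (Σ_{i=1}^k w_i g_{μ_i}(x)) dx = Σ_{j=0}^∞ J_{f,j} · m_j. -/
open MeasureTheory Real Finset

/-- `J_{f,j} = ∫_S f(x) · (1/(√(2π)·j!)) · e^{-x²/2} · h_j(x) dx`, where `S = [-R, R]`. -/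
noncomputable def Jint (R : ℝ) (f : ℝ → ℝ) (j : ℕ) : ℝ :=
  ∫ x in Set.Icc (-R) R,
    f x * (1 / (Real.sqrt (2 * π) * (Nat.factorial j))) * Real.exp (-x ^ 2 / 2) * hermiteR j x

/-- The density of the normal distribution `N(μ, 1)`. -/
noncomputable def gaussd (μ x : ℝ) : ℝ := (1 / Real.sqrt (2 * π)) * Real.exp (-(x - μ) ^ 2 / 2)

/-!
Expanding `exp (x t) · exp (σ t² / 2)` in powers of `t` gives the coefficients
`∑ᵢ σⁱ (2i-1)‼ C(n,2i) xⁿ⁻²ⁱ / n!`. For `σ = -1` this is the Hermite generating function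
`∑ₙ hₙ(x) tⁿ / n! = exp (x t - t² / 2)`, hence `g_μ(x) = ∑ⱼ g₀(x) hⱼ(x) μʲ / j!`; integrating
`f g_μ` over `S` term by term gives `∑ⱼ J_{f,j} μʲ`, and averaging over the components gives the
moments. For `σ = 1` the same expansion, at `x = R`, is a majorant of `∑ₙ |hₙ(x)| |t|ⁿ / n!` on `S`,
which justifies the term-by-term integration for every `f` integrable on `S`.
-/

open scoped Nat

theorem Nat.doubleFactorial_mul_choose_mul_factorial {n i : ℕ} (h : 2 * i ≤ n) :
    (2 * i - 1)‼ * n.choose (2 * i) * ((n - 2 * i)! * (2 ^ i * i !)) = n ! := by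
  have two_mul_factorial : (2 * i)! = (2 * i - 1)‼ * (2 ^ i * i !) := by
    rcases i with _ | i
    · rfl
    · rw [← Nat.doubleFactorial_two_mul, show 2 * (i + 1) = (2 * i + 1) + 1 by ring,
        Nat.factorial_eq_mul_doubleFactorial, Nat.add_sub_cancel, mul_comm]
  rw [← Nat.choose_mul_factorial_mul_factorial h, two_mul_factorial]
  ring

noncomputable def hermiteSum (σ : ℝ) (n : ℕ) (x : ℝ) : ℝ :=
  ∑ i ∈ range (n / 2 + 1), σ ^ i * ((2 * i - 1)‼ * n.choose (2 * i) : ℕ) * x ^ (n - 2 * i)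

def sigmaHalfEquivProd : (Σ n : ℕ, Fin (n / 2 + 1)) ≃ ℕ × ℕ where
  toFun p := (p.1 - 2 * p.2, p.2)
  invFun q := ⟨q.1 + 2 * q.2, ⟨q.2, by omega⟩⟩
  left_inv := by
    rintro ⟨n, i, hi⟩
    have h : n - 2 * i + 2 * i = n := by omega
    exact Sigma.ext h ((Fin.heq_ext_iff (by dsimp only; rw [h])).mpr rfl)
  right_inv := by
    rintro ⟨k, i⟩
    exact Prod.ext (by simp) rfl

lemma hasSum_pow_div_factorial (t : ℝ) : HasSum (fun n : ℕ => t ^ n / n !) (exp t) := by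
  rw [exp_eq_exp_ℝ]
  exact NormedSpace.expSeries_div_hasSum_exp t

lemma hasSum_pow_div_factorial_mul_pow_div_factorial (a b : ℝ) :
    HasSum (fun p : ℕ × ℕ => a ^ p.1 / p.1 ! * (b ^ p.2 / p.2 !)) (exp (a + b)) := by
  rw [exp_add]
  exact (hasSum_pow_div_factorial a).mul (hasSum_pow_div_factorial b)
    (summable_mul_of_summable_norm (f := fun n : ℕ => a ^ n / n !) (g := fun n : ℕ => b ^ n / n !)
      (NormedSpace.norm_expSeries_div_summable a) (NormedSpace.norm_expSeries_div_summable b))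

theorem hasSum_hermiteSum_mul_pow_div_factorial (σ x t : ℝ) :
    HasSum (fun n => hermiteSum σ n x * (t ^ n / n !)) (exp (x * t + σ * t ^ 2 / 2)) := by
  have hprod := hasSum_pow_div_factorial_mul_pow_div_factorial (x * t) (σ * t ^ 2 / 2)
  refine (sigmaHalfEquivProd.hasSum_iff.mpr hprod).sigma fun n => ?_
  convert hasSum_fintype _ using 1
  rw [hermiteSum, Finset.sum_mul, ← Fin.sum_univ_eq_sum_range]
  refine Finset.sum_congr rfl fun ⟨i, hi⟩ _ => ?_
  have h2i : 2 * i ≤ n := by omega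
  have hcoef := Nat.doubleFactorial_mul_choose_mul_factorial h2i
  have ht : t ^ n = t ^ (n - 2 * i) * (t ^ 2) ^ i := by
    rw [← pow_mul, ← pow_add, Nat.sub_add_cancel h2i]
  simp only [sigmaHalfEquivProd, Equiv.coe_fn_mk, Function.comp_apply, mul_pow, div_pow, ht]
  have hchoose : (n.choose (2 * i) : ℝ) ≠ 0 := mod_cast (Nat.choose_pos h2i).ne'
  rw [← hcoef]
  push_cast
  field_simp

lemma hermiteR_eq_sum_coeff (n : ℕ) (x : ℝ) :
    hermiteR n x = ∑ k ∈ range (n + 1), ((Polynomial.hermite n).coeff k : ℝ) * x ^ k := by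
  simp [hermiteR, Polynomial.aeval_eq_sum_range, Polynomial.natDegree_hermite, zsmul_eq_mul]

lemma hermiteR_eq_hermiteSum (n : ℕ) (x : ℝ) : hermiteR n x = hermiteSum (-1) n x := by
  have hinj : Set.InjOn (fun i => n - 2 * i) (range (n / 2 + 1)) := by
    intro i hi j hj h
    simp only [coe_range, Set.mem_Iio] at hi hj h
    omega
  have hsub : (range (n / 2 + 1)).image (fun i => n - 2 * i) ⊆ range (n + 1) := by
    intro k hk
    simp only [mem_image, mem_range] at hk ⊢
    omega
  rw [hermiteR_eq_sum_coeff, hermiteSum, ← Finset.sum_subset hsub, Finset.sum_image hinj]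
  · refine Finset.sum_congr rfl fun i hi => ?_
    have h2i : 2 * i ≤ n := by simp only [mem_range] at hi; omega
    rw [Polynomial.coeff_hermite_of_even_add ⟨n - i, by omega⟩, Nat.sub_sub_self h2i,
      Nat.mul_div_cancel_left i two_pos, Nat.choose_symm h2i]
    push_cast
    ring
  · intro k hk hk'
    have hodd : Odd (n + k) := by
      by_contra heven
      obtain ⟨m, hm⟩ := Nat.not_odd_iff_even.mp heven
      simp only [mem_range] at hk
      exact hk' (mem_image.mpr ⟨(n - k) / 2, mem_range.mpr (by omega), by omega⟩)
    rw [Polynomial.coeff_hermite_of_odd_add hodd, Int.cast_zero, zero_mul]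

lemma abs_hermiteR_le_hermiteSum {R x : ℝ} (hx : |x| ≤ R) (n : ℕ) :
    |hermiteR n x| ≤ hermiteSum 1 n R := by
  rw [hermiteR_eq_hermiteSum, hermiteSum, hermiteSum]
  refine (Finset.abs_sum_le_sum_abs _ _).trans (Finset.sum_le_sum fun i _ => ?_)
  rw [abs_mul, abs_mul, abs_pow, abs_pow, abs_neg, abs_one, Nat.abs_cast]
  gcongr

lemma gaussd_nonneg (μ x : ℝ) : 0 ≤ gaussd μ x := by
  unfold gaussd
  positivity

lemma gaussd_le_one (μ x : ℝ) : gaussd μ x ≤ 1 := by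
  have hsqrt : 1 ≤ √(2 * π) := Real.one_le_sqrt.mpr (by nlinarith [pi_gt_three])
  have hexp : exp (-(x - μ) ^ 2 / 2) ≤ 1 := exp_le_one_iff.mpr (by nlinarith [sq_nonneg (x - μ)])
  calc gaussd μ x ≤ 1 * 1 := by
        unfold gaussd
        gcongr
        exact div_le_one_of_le₀ hsqrt (by positivity)
    _ = 1 := one_mul 1

lemma continuous_gaussd (μ : ℝ) : Continuous (gaussd μ) := by
  unfold gaussd
  fun_prop

noncomputable def hermiteKernel (j : ℕ) (x : ℝ) : ℝ := gaussd 0 x * hermiteR j x / j !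

lemma Jint_mul_pow_eq_setIntegral (R : ℝ) (F : ℝ → ℝ) (j : ℕ) (c : ℝ) :
    Jint R F j * c ^ j = ∫ x in Set.Icc (-R) R, F x * (hermiteKernel j x * c ^ j) := by
  rw [Jint, ← integral_mul_const]
  congr 1 with x
  simp only [hermiteKernel, gaussd, sub_zero]
  ring

lemma continuous_hermiteKernel (j : ℕ) : Continuous (hermiteKernel j) :=
  ((continuous_gaussd 0).mul (Polynomial.continuous_aeval _)).div_const _

lemma hasSum_hermiteKernel_mul_pow (x c : ℝ) :
    HasSum (fun j => hermiteKernel j x * c ^ j) (gaussd c x) := by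
  have h := (hasSum_hermiteSum_mul_pow_div_factorial (-1) x c).mul_left (gaussd 0 x)
  have hgauss : gaussd 0 x * exp (x * c + -1 * c ^ 2 / 2) = gaussd c x := by
    rw [gaussd, gaussd, mul_assoc, ← exp_add]
    congr 2
    ring
  have hterm : (fun j => hermiteKernel j x * c ^ j) =
      fun j => gaussd 0 x * (hermiteSum (-1) j x * (c ^ j / j !)) := by
    ext j
    rw [hermiteKernel, hermiteR_eq_hermiteSum]
    ring
  rwa [hterm, ← hgauss]

lemma abs_hermiteKernel_mul_pow_le {R x : ℝ} (hx : |x| ≤ R) (j : ℕ) (c : ℝ) :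
    |hermiteKernel j x * c ^ j| ≤ hermiteSum 1 j R * (|c| ^ j / j !) := by
  rw [hermiteKernel, abs_mul, abs_div, abs_mul, abs_of_nonneg (gaussd_nonneg 0 x), Nat.abs_cast,
    abs_pow]
  calc gaussd 0 x * |hermiteR j x| / j ! * |c| ^ j ≤ 1 * hermiteSum 1 j R / j ! * |c| ^ j := by
        gcongr
        · exact gaussd_le_one 0 x
        · exact abs_hermiteR_le_hermiteSum hx j
    _ = hermiteSum 1 j R * (|c| ^ j / j !) := by ring

section Integral

variable {R : ℝ} {F : ℝ → ℝ}

lemma integrableOn_Icc_mul_continuous (hF : IntegrableOn F (Set.Icc (-R) R)) {g : ℝ → ℝ}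
    (hg : Continuous g) : IntegrableOn (fun x => F x * g x) (Set.Icc (-R) R) :=
  hF.mul_continuousOn hg.continuousOn isCompact_Icc

lemma summable_setIntegral_norm_mul_hermiteKernel_mul_pow
    (hF : IntegrableOn F (Set.Icc (-R) R)) (c : ℝ) :
    Summable fun j => ∫ x in Set.Icc (-R) R, ‖F x * (hermiteKernel j x * c ^ j)‖ := by
  have hmajorant : Summable fun j => (∫ x in Set.Icc (-R) R, ‖F x‖) *
      (hermiteSum 1 j R * (|c| ^ j / j !)) :=
    ((hasSum_hermiteSum_mul_pow_div_factorial 1 R |c|).summable).mul_left _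
  refine hmajorant.of_nonneg_of_le (fun j => integral_nonneg fun x => norm_nonneg _) fun j => ?_
  rw [← integral_mul_const]
  refine setIntegral_mono_on ?_ (hF.norm.mul_const _) measurableSet_Icc fun x hx => ?_
  · exact (integrableOn_Icc_mul_continuous hF (g := fun x => hermiteKernel j x * c ^ j)
      ((continuous_hermiteKernel j).mul continuous_const)).norm
  · rw [norm_mul]
    exact mul_le_mul_of_nonneg_left
      (abs_hermiteKernel_mul_pow_le (abs_le.mpr hx) j c) (norm_nonneg _)

theorem hasSum_Jint_mul_pow (hF : IntegrableOn F (Set.Icc (-R) R)) (c : ℝ) :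
    HasSum (fun j => Jint R F j * c ^ j) (∫ x in Set.Icc (-R) R, F x * gaussd c x) := by
  have h := hasSum_integral_of_summable_integral_norm
    (fun j => integrableOn_Icc_mul_continuous hF (g := fun x => hermiteKernel j x * c ^ j)
      ((continuous_hermiteKernel j).mul continuous_const))
    (summable_setIntegral_norm_mul_hermiteKernel_mul_pow hF c)
  have hpoint : ∀ x, ∑' j, F x * (hermiteKernel j x * c ^ j) = F x * gaussd c x :=
    fun x => ((hasSum_hermiteKernel_mul_pow x c).mul_left (F x)).tsum_eq
  simpa only [hpoint, ← Jint_mul_pow_eq_setIntegral] using h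

theorem summable_abs_Jint_mul_pow (hF : IntegrableOn F (Set.Icc (-R) R)) (c : ℝ) :
    Summable fun j => |Jint R F j * c ^ j| := by
  refine (summable_setIntegral_norm_mul_hermiteKernel_mul_pow hF c).of_nonneg_of_le
    (fun j => abs_nonneg _) fun j => ?_
  rw [Jint_mul_pow_eq_setIntegral, ← Real.norm_eq_abs]
  exact norm_integral_le_integral_norm _

variable {ι : Type*} [Fintype ι]

theorem hasSum_Jint_mul_moment (hF : IntegrableOn F (Set.Icc (-R) R)) (w μ : ι → ℝ) :
    HasSum (fun j => Jint R F j * ∑ t, w t * μ t ^ j)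
      (∫ x in Set.Icc (-R) R, F x * ∑ t, w t * gaussd (μ t) x) := by
  have h := hasSum_sum fun t (_ : t ∈ univ) => (hasSum_Jint_mul_pow hF (μ t)).mul_left (w t)
  have hsplit : ∫ x in Set.Icc (-R) R, F x * ∑ t, w t * gaussd (μ t) x =
      ∑ t, w t * ∫ x in Set.Icc (-R) R, F x * gaussd (μ t) x :=
    calc ∫ x in Set.Icc (-R) R, F x * ∑ t, w t * gaussd (μ t) x
        = ∫ x in Set.Icc (-R) R, ∑ t, w t * (F x * gaussd (μ t) x) := by
          congr 1 with x
          rw [mul_sum]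
          exact sum_congr rfl fun t _ => by ring
      _ = ∑ t, ∫ x in Set.Icc (-R) R, w t * (F x * gaussd (μ t) x) :=
          integral_finsetSum _ fun t _ =>
            (integrableOn_Icc_mul_continuous hF (continuous_gaussd (μ t))).const_mul (w t)
      _ = ∑ t, w t * ∫ x in Set.Icc (-R) R, F x * gaussd (μ t) x := by
          simp only [integral_const_mul]
  have hterm : (fun j => Jint R F j * ∑ t, w t * μ t ^ j) =
      fun j => ∑ t, w t * (Jint R F j * μ t ^ j) := by
    ext j
    rw [mul_sum]
    exact sum_congr rfl fun t _ => by ring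
  rw [hterm, hsplit]
  exact h

theorem summable_abs_Jint_mul_moment (hF : IntegrableOn F (Set.Icc (-R) R)) (w μ : ι → ℝ) :
    Summable fun j => |Jint R F j * ∑ t, w t * μ t ^ j| := by
  have h := summable_sum fun t (_ : t ∈ univ) => (summable_abs_Jint_mul_pow hF (μ t)).mul_left |w t|
  refine h.of_nonneg_of_le (fun j => abs_nonneg _) fun j => ?_
  rw [mul_sum]
  refine (abs_sum_le_sum_abs _ _).trans (sum_le_sum fun t _ => ?_)
  rw [← abs_mul]
  exact le_of_eq (congrArg abs (by ring))

end Integral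

theorem integral_eq_tsum_J_moments_general (R : ℝ) (k : ℕ) (w μ : Fin k → ℝ) (f : Polynomial ℝ) :
    Summable (fun j : ℕ => |Jint R (fun x => f.eval x) j * ∑ t, w t * μ t ^ j|) ∧
      ∫ x in Set.Icc (-R) R, f.eval x * ∑ t, w t * gaussd (μ t) x =
        ∑' j : ℕ, Jint R (fun x => f.eval x) j * ∑ t, w t * μ t ^ j := by
  have hf : IntegrableOn (fun x => f.eval x) (Set.Icc (-R) R) := f.continuous.integrableOn_Icc
  exact ⟨summable_abs_Jint_mul_moment hf w μ, (hasSum_Jint_mul_moment hf w μ).tsum_eq.symm⟩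

/-- For every polynomial `f`, `∑_j J_{f,j} m_j` converges absolutely and equals
`∫_S f(x) (∑_t w_t g_{μ_t}(x)) dx`, where `m_j = ∑_t w_t μ_t^j`. -/
theorem integral_eq_tsum_J_moments (R M : ℝ) (hR : 0 < R) (hM : 0 < M) (k : ℕ) (hk : 1 ≤ k)
    (w μ : Fin k → ℝ) (hw : ∀ t, 0 < w t) (hsum : ∑ t, w t = 1)
    (hμ : ∀ t, μ t ∈ Set.Icc (-M) M) (f : Polynomial ℝ) :
    Summable (fun j : ℕ => |Jint R (fun x => f.eval x) j * ∑ t, w t * μ t ^ j|) ∧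
      ∫ x in Set.Icc (-R) R, f.eval x * ∑ t, w t * gaussd (μ t) x =
        ∑' j : ℕ, Jint R (fun x => f.eval x) j * ∑ t, w t * μ t ^ j :=
  integral_eq_tsum_J_moments_general R k w μ f
end
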